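/- Let α ∈ T_n be an idempotent of rank l and let β, γ ∈ T_n both have stable rank l in (T_n, *_α). Then β * γ also has stable rank l, the stable kernel of β*γ equals the stable kernel of β, and the stable image of β*γ equals the stable image of γ. In particular, the set T_n^{(l)} of elements of stable rank l is a subsemigroup of (T_n, *_α). -/

import Mathlib

/-- The sandwich multiplication `β *_α γ = βαγ` (left-to-right composition). -/
def vmul {n : ℕ} (α β γ : Fin n → Fin n) : Fin n → Fin n :=
  fun x => γ (α (β x))

/-- `vpow α β m = β^{*(m+1)}`, the positive `*_α`-powers of `β`. -/
def vpow {n : ℕ} (α β : Fin n → Fin n) : ℕ → (Fin n → Fin n)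
  | 0 => β
  | m + 1 => vmul α (vpow α β m) β

/-- The rank of a transformation: the cardinality of its image. -/
def rank {n : ℕ} (f : Fin n → Fin n) : ℕ := (Finset.image f Finset.univ).card

/-!
Write `A = im α` and, for `φ ∈ T_n`, `h_φ = α ∘ φ` (first `φ`, then `α`), so that
`φ^{*(m+1)} = φ ∘ h_φ^[m]`. Each `φ^{*(m+3)}` has image inside `φ(h_φ(A))`, so `φ` has
stable rank `|A|` exactly when `h_φ` permutes `A`; then `φ` is injective on `A`, every
`φ^{*(m+2)}` has image `φ(A)`, and the kernel of an idempotent power of `φ` is the kernel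
of `h_φ`. Since `h_{β*γ} = h_γ ∘ h_β`, the permutation property passes to
`β * γ`, whose stable image is then `γ(h_β(A)) = γ(A)` and whose stable kernel is that
of `h_β`, as `h_γ` is injective on `A ∋ h_β x`.
-/

open Function Set

section

variable {n : ℕ} {α φ : Fin n → Fin n}

theorem rank_eq_ncard_range (f : Fin n → Fin n) : rank f = (range f).ncard := by
  rw [rank, ← ncard_coe_finset, Finset.coe_image, Finset.coe_univ, image_univ]

theorem vpow_eq_comp_iterate (α φ : Fin n → Fin n) (m : ℕ) :
    vpow α φ m = φ ∘ (α ∘ φ)^[m] := by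
  induction m with
  | zero => rfl
  | succ m ih =>
    funext x
    simp only [vpow, vmul, ih, comp_apply, iterate_succ_apply']

theorem vmul_vpow_vpow (α φ : Fin n → Fin n) (a b : ℕ) :
    vmul α (vpow α φ a) (vpow α φ b) = vpow α φ (a + b + 1) := by
  funext x
  simp only [vpow_eq_comp_iterate, vmul, comp_apply]
  rw [show a + b + 1 = b + (a + 1) by omega, iterate_add_apply, iterate_succ_apply']
  rfl

theorem vpow_eq_vpow_of_idempotent {m : ℕ}
    (he : vmul α (vpow α φ m) (vpow α φ m) = vpow α φ m) :
    vpow α φ m = vpow α φ (m + m + 1) := by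
  rw [← vmul_vpow_vpow, he]

theorem surjOn_of_stable_rank (hφ : ∃ M : ℕ, ∀ m ≥ M, rank (vpow α φ m) = rank α) :
    SurjOn (α ∘ φ) (range α) (range α) := by
  obtain ⟨M, hM⟩ := hφ
  have hmaps : MapsTo (α ∘ φ) (range α) (range α) := fun _ _ => mem_range_self _
  have hsub : range (vpow α φ (M + 2)) ⊆ φ '' ((α ∘ φ) '' range α) := by
    rintro _ ⟨x, rfl⟩
    rw [vpow_eq_comp_iterate, comp_apply, iterate_succ_apply']
    refine mem_image_of_mem φ (mem_image_of_mem _ ?_)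
    rw [iterate_succ_apply']
    exact mem_range_self _
  have hcard : (range α).ncard ≤ ((α ∘ φ) '' range α).ncard := by
    calc (range α).ncard = (range (vpow α φ (M + 2))).ncard := by
          rw [← rank_eq_ncard_range, ← rank_eq_ncard_range, hM _ (by omega)]
      _ ≤ (φ '' ((α ∘ φ) '' range α)).ncard := ncard_le_ncard hsub
      _ ≤ ((α ∘ φ) '' range α).ncard := ncard_image_le
  exact (eq_of_subset_of_ncard_le hmaps.image_subset hcard).symm.subset

theorem bijOn_range_of_surjOn (hφ : SurjOn (α ∘ φ) (range α) (range α)) :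
    BijOn (α ∘ φ) (range α) (range α) :=
  ((toFinite _).surjOn_iff_bijOn_of_mapsTo (fun _ _ => mem_range_self _)).mp hφ

theorem range_iterate_succ_eq (hφ : SurjOn (α ∘ φ) (range α) (range α)) (m : ℕ) :
    range ((α ∘ φ)^[m + 1]) = range α := by
  rw [iterate_succ, range_comp, (range_comp_subset_range φ α).antisymm
    (hφ.trans (image_subset_range _ _))]
  exact ((bijOn_range_of_surjOn hφ).iterate m).image_eq

theorem range_vpow_succ (hφ : SurjOn (α ∘ φ) (range α) (range α)) (m : ℕ) :
    range (vpow α φ (m + 1)) = φ '' range α := by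
  rw [vpow_eq_comp_iterate, range_comp, range_iterate_succ_eq hφ]

theorem rank_vpow_succ (hφ : SurjOn (α ∘ φ) (range α) (range α)) (m : ℕ) :
    rank (vpow α φ (m + 1)) = rank α := by
  rw [rank_eq_ncard_range, range_vpow_succ hφ, (bijOn_range_of_surjOn hφ).injOn.of_comp.ncard_image,
    rank_eq_ncard_range]

theorem vpow_apply_eq_iff_of_idempotent (hφ : SurjOn (α ∘ φ) (range α) (range α)) {m : ℕ}
    (he : vmul α (vpow α φ m) (vpow α φ m) = vpow α φ m) (x y : Fin n) :
    vpow α φ m x = vpow α φ m y ↔ α (φ x) = α (φ y) := by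
  constructor
  · intro hxy
    have hiter : (α ∘ φ)^[m + 1] x = (α ∘ φ)^[m + 1] y := by
      rw [iterate_succ_apply', iterate_succ_apply']
      simpa only [vpow_eq_comp_iterate, comp_apply] using congrArg α hxy
    rw [iterate_succ_apply, iterate_succ_apply] at hiter
    exact ((bijOn_range_of_surjOn hφ).iterate m).injOn (mem_range_self _) (mem_range_self _) hiter
  · intro hxy
    rw [vpow_eq_vpow_of_idempotent he, vpow_eq_comp_iterate, comp_apply, comp_apply,
      iterate_succ_apply, iterate_succ_apply]
    exact congrArg _ (congrArg _ hxy)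

theorem surjOn_vmul {β γ : Fin n → Fin n} (hβ : SurjOn (α ∘ β) (range α) (range α))
    (hγ : SurjOn (α ∘ γ) (range α) (range α)) :
    SurjOn (α ∘ vmul α β γ) (range α) (range α) :=
  hγ.comp hβ

end

theorem stable_rank_top_subsemigroup_general {n l : ℕ} (α : Fin n → Fin n)
    (hl : rank α = l) (β γ : Fin n → Fin n)
    (hβ : ∃ M : ℕ, ∀ m ≥ M, rank (vpow α β m) = l)
    (hγ : ∃ M : ℕ, ∀ m ≥ M, rank (vpow α γ m) = l) :
    (∃ M : ℕ, ∀ m ≥ M, rank (vpow α (vmul α β γ) m) = l) ∧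
    (∀ m₁ m₂ m₃ : ℕ,
      vmul α (vpow α β m₁) (vpow α β m₁) = vpow α β m₁ →
      vmul α (vpow α γ m₂) (vpow α γ m₂) = vpow α γ m₂ →
      vmul α (vpow α (vmul α β γ) m₃) (vpow α (vmul α β γ) m₃) =
        vpow α (vmul α β γ) m₃ →
      (∀ x y : Fin n,
        vpow α (vmul α β γ) m₃ x = vpow α (vmul α β γ) m₃ y ↔
          vpow α β m₁ x = vpow α β m₁ y) ∧
      Set.range (vpow α (vmul α β γ) m₃) = Set.range (vpow α γ m₂)) := by
  subst hl
  have hβ' := surjOn_of_stable_rank hβ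
  have hγ' := surjOn_of_stable_rank hγ
  have hδ := surjOn_vmul hβ' hγ'
  refine ⟨⟨1, fun m hm => ?_⟩, fun m₁ m₂ m₃ he₁ he₂ he₃ => ⟨fun x y => ?_, ?_⟩⟩
  · obtain ⟨k, rfl⟩ := Nat.exists_eq_add_of_le' hm
    exact rank_vpow_succ hδ k
  · rw [vpow_apply_eq_iff_of_idempotent hδ he₃, vpow_apply_eq_iff_of_idempotent hβ' he₁]
    exact (bijOn_range_of_surjOn hγ').injOn.eq_iff (mem_range_self _) (mem_range_self _)
  · rw [vpow_eq_vpow_of_idempotent he₃, vpow_eq_vpow_of_idempotent he₂, range_vpow_succ hδ,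
      range_vpow_succ hγ', show vmul α β γ = γ ∘ (α ∘ β) from rfl, image_comp,
      (bijOn_range_of_surjOn hβ').image_eq]

/-- If `β, γ` both have stable rank `l = rank α` in `(T_n, *_α)`, then so does
`β * γ`; moreover the stable kernel of `β*γ` equals that of `β` and the stable
image of `β*γ` equals that of `γ` (kernels and images of the idempotent powers).
In particular the elements of stable rank `l` form a subsemigroup. -/
theorem stable_rank_top_subsemigroup {n l : ℕ} (α : Fin n → Fin n)
    (hα : ∀ x, α (α x) = α x) (hl : rank α = l) (β γ : Fin n → Fin n)
    (hβ : ∃ M : ℕ, ∀ m ≥ M, rank (vpow α β m) = l)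
    (hγ : ∃ M : ℕ, ∀ m ≥ M, rank (vpow α γ m) = l) :
    (∃ M : ℕ, ∀ m ≥ M, rank (vpow α (vmul α β γ) m) = l) ∧
    (∀ m₁ m₂ m₃ : ℕ,
      vmul α (vpow α β m₁) (vpow α β m₁) = vpow α β m₁ →
      vmul α (vpow α γ m₂) (vpow α γ m₂) = vpow α γ m₂ →
      vmul α (vpow α (vmul α β γ) m₃) (vpow α (vmul α β γ) m₃) =
        vpow α (vmul α β γ) m₃ →
      (∀ x y : Fin n,
        vpow α (vmul α β γ) m₃ x = vpow α (vmul α β γ) m₃ y ↔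
          vpow α β m₁ x = vpow α β m₁ y) ∧
      Set.range (vpow α (vmul α β γ) m₃) = Set.range (vpow α γ m₂)) :=
  stable_rank_top_subsemigroup_general α hl β γ hβ hγ
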